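/- Let F be a field of characteristic 2, let (A,σ) be a central simple F-algebra with orthogonal involution, and let K/F be a finite field extension of odd degree. Then S(A_K, σ_K) equals the K-subspace of A_K = A ⊗_F K spanned by the elements x ⊗ 1 with x ∈ S(A,σ). -/

import Mathlib

/-!
In characteristic 2 the cross terms `σ u * v + σ v * u = (id - σ) (σ u * v)` are alternating, so
`x ↦ σ x * x` is additive modulo `Alt(A,σ)` and `S(A,σ)` is an `F`-subspace. Writing `x ∈ A_K` as
`∑ bᵢ ⊗ xᵢ` for an `F`-basis `(bᵢ)` of `K` then gives `σ_K x * x ≡ ∑ bᵢ² ⊗ σ xᵢ * xᵢ` modulo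
`Alt(A_K,σ_K) = Alt(A,σ)_K`. As `[K:F]` is odd, the `bᵢ²` again form a basis of `K` (the span of
all squares is a subfield over which every element has degree at most 2), so `x ∈ S(A_K,σ_K)`
exactly when every `xᵢ ∈ S(A,σ)`.
-/

open scoped TensorProduct

/-- `Alt(A,σ) = {x - σ(x) : x ∈ A}`. -/
def altSet {F A : Type*} [Field F] [Ring A] [Algebra F A] (σ : A →ₗ[F] A) : Set A :=
  {y | ∃ x : A, y = x - σ x}

/-- `S(A,σ) = {x ∈ A : σ(x)x ∈ F·1 + Alt(A,σ)}`. -/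
def sSet {F A : Type*} [Field F] [Ring A] [Algebra F A] (σ : A →ₗ[F] A) : Set A :=
  {x | ∃ α : F, σ x * x - algebraMap F A α ∈ altSet σ}

/-- An involution of the first kind is orthogonal if `Alt(A,σ) ∩ F·1 = {0}`. -/
def IsOrthogonal {F A : Type*} [Field F] [Ring A] [Algebra F A] (σ : A →ₗ[F] A) : Prop :=
  altSet σ ∩ Set.range (algebraMap F A) = {0}

section Squares

variable {F K : Type*} [Field F] [Field K] [Algebra F K]

theorem IntermediateField.mem_of_sq_mem [FiniteDimensional F K] (hodd : Odd (Module.finrank F K))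
    (E : IntermediateField F K) {c : K} (hc : c ^ 2 ∈ E) : c ∈ E := by
  have hroot :
      Polynomial.aeval c (Polynomial.X ^ 2 - Polynomial.C ⟨c ^ 2, hc⟩ : Polynomial E) = 0 := by
    simp
  have hle : (minpoly E c).natDegree ≤ 2 := by
    simpa using Polynomial.natDegree_le_of_dvd (minpoly.dvd E c hroot)
      (Polynomial.monic_X_pow_sub_C _ two_ne_zero).ne_zero
  obtain ⟨k, hk⟩ : Odd (minpoly E c).natDegree :=
    hodd.of_dvd_nat ((minpoly.degree_dvd (.of_finite E c)).trans
      (Dvd.intro_left _ (Module.finrank_mul_finrank F E K)))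
  obtain ⟨y, hy⟩ := (minpoly.natDegree_eq_one_iff (A := E) (x := c)).mp (by omega)
  exact hy ▸ y.2

theorem span_range_sq_eq_top [FiniteDimensional F K] (hodd : Odd (Module.finrank F K)) :
    Submodule.span F (Set.range fun c : K => c ^ 2) = ⊤ := by
  set V := Submodule.span F (Set.range fun c : K => c ^ 2)
  have hmul : ∀ x y, x ∈ V → y ∈ V → x * y ∈ V := by
    have : V * V ≤ V := by
      rw [Submodule.span_mul_span]
      refine Submodule.span_mono ?_
      rintro - ⟨-, ⟨c, rfl⟩, -, ⟨d, rfl⟩, rfl⟩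
      exact ⟨c * d, mul_pow c d 2⟩
    exact fun x y hx hy => this (Submodule.mul_mem_mul hx hy)
  -- `x⁻¹ = x * (x⁻¹) ^ 2`, so the algebra `V` is a field
  let E := (V.toSubalgebra (Submodule.subset_span ⟨1, one_pow 2⟩) hmul).toIntermediateField
    fun x hx => by
      rw [show x⁻¹ = x * x⁻¹ ^ 2 by rcases eq_or_ne x 0 with rfl | h <;> field_simp]
      exact hmul _ _ hx (Submodule.subset_span ⟨x⁻¹, rfl⟩)
  rw [eq_top_iff]
  intro c _
  exact E.mem_of_sq_mem hodd (Submodule.subset_span ⟨c, rfl⟩)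

theorem Module.Basis.exists_basis_sq [CharP F 2] [FiniteDimensional F K]
    (hodd : Odd (Module.finrank F K)) {ι : Type*} [Fintype ι] (b : Module.Basis ι F K) :
    ∃ b₂ : Module.Basis ι F K, ∀ i, b₂ i = b i ^ 2 := by
  have : CharP K 2 := charP_of_injective_algebraMap (algebraMap F K).injective 2
  have hspan : ⊤ ≤ Submodule.span F (Set.range fun i => b i ^ 2) := by
    rw [← span_range_sq_eq_top hodd, Submodule.span_le]
    rintro - ⟨c, rfl⟩
    dsimp only
    rw [SetLike.mem_coe, ← b.sum_repr c, CharTwo.sum_sq]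
    exact Submodule.sum_mem _ fun i _ => by
      rw [smul_pow]
      exact Submodule.smul_mem _ _ (Submodule.subset_span ⟨i, rfl⟩)
  exact ⟨basisOfTopLeSpanOfCardEqFinrank _ hspan (Module.finrank_eq_card_basis b).symm,
    fun i => by rw [coe_basisOfTopLeSpanOfCardEqFinrank]⟩

end Squares

section BaseChange

open TensorProduct

variable {R S M N : Type*} [CommRing R] [CommRing S] [Algebra R S]
  [AddCommGroup M] [Module R M] [AddCommGroup N] [Module R N]

theorem LinearMap.range_baseChange (f : M →ₗ[R] N) :
    LinearMap.range (f.baseChange S) = (LinearMap.range f).baseChange S := by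
  conv_lhs => rw [show f = (LinearMap.range f).subtype ∘ₗ f.rangeRestrict from rfl,
    LinearMap.baseChange_comp]
  exact LinearMap.range_comp_of_range_eq_top _ (LinearMap.range_eq_top.mpr
    (f.rangeRestrict.baseChange_surjective S f.surjective_rangeRestrict))

theorem Submodule.baseChange_sup (p q : Submodule R M) :
    (p ⊔ q).baseChange S = p.baseChange S ⊔ q.baseChange S := by
  conv_lhs => rw [← p.span_eq, ← q.span_eq, ← Submodule.span_union]
  rw [Submodule.baseChange_span, Set.image_union, Submodule.span_union,
    ← Submodule.baseChange_span, ← Submodule.baseChange_span, p.span_eq, q.span_eq]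

theorem Submodule.baseChange_one {A : Type*} [Ring A] [Algebra R A] :
    (1 : Submodule R A).baseChange S = 1 := by
  rw [Submodule.one_eq_span, Submodule.one_eq_span, Submodule.baseChange_span,
    Set.image_singleton]
  rfl

theorem Module.Basis.exists_sum_tmul_eq {ι : Type*} [Fintype ι] (b : Module.Basis ι R S)
    (x : S ⊗[R] M) : ∃ y : ι → M, ∑ i, b i ⊗ₜ[R] y i = x := by
  obtain ⟨c, hc⟩ := TensorProduct.eq_repr_basis_left b x
  exact ⟨c, by rwa [Finsupp.sum_fintype _ _ (by simp)] at hc⟩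

theorem Module.Basis.sum_tmul_mem_baseChange_iff {ι : Type*} [Fintype ι] (b : Module.Basis ι R S)
    (p : Submodule R M) (y : ι → M) :
    ∑ i, b i ⊗ₜ[R] y i ∈ p.baseChange S ↔ ∀ i, y i ∈ p := by
  classical
  refine ⟨fun h i => ?_, fun h =>
    Submodule.sum_mem _ fun i _ => Submodule.tmul_mem_baseChange_of_mem _ (h i)⟩
  have hcoord : ∀ x ∈ p.baseChange S, equivFinsuppOfBasisLeft b x i ∈ p := by
    rintro - ⟨x, rfl⟩
    induction x with
    | zero => simp
    | tmul s m => simpa [equivFinsuppOfBasisLeft_apply_tmul_apply] using p.smul_mem _ m.2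
    | add x y hx hy => simpa using p.add_mem hx hy
  simpa [equivFinsuppOfBasisLeft_apply_tmul_apply, Finsupp.single_apply] using hcoord _ h

end BaseChange

theorem CharTwo.neg_eq_of_module (R : Type*) {M : Type*} [Ring R] [CharP R 2] [AddCommGroup M]
    [Module R M] (x : M) : -x = x := by
  rw [← neg_one_smul R x, CharTwo.neg_eq, one_smul]

section Involution

variable {F A : Type*} [Field F] [Ring A] [Algebra F A]

def altSubmodule (σ : A →ₗ[F] A) : Submodule F A :=
  LinearMap.range (LinearMap.id - σ)

theorem coe_altSubmodule (σ : A →ₗ[F] A) : (altSubmodule σ : Set A) = altSet σ := by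
  ext y
  exact ⟨fun ⟨x, hx⟩ => ⟨x, hx.symm⟩, fun ⟨x, hx⟩ => ⟨x, hx.symm⟩⟩

theorem mem_sSet_iff (σ : A →ₗ[F] A) {x : A} :
    x ∈ sSet σ ↔ σ x * x ∈ 1 ⊔ altSubmodule σ := by
  simp only [sSet, Set.mem_ofPred_eq, Submodule.mem_sup, Submodule.mem_one,
    ← SetLike.mem_coe (p := altSubmodule σ), coe_altSubmodule]
  constructor
  · rintro ⟨α, hα⟩
    exact ⟨_, ⟨α, rfl⟩, _, hα, add_sub_cancel _ _⟩
  · rintro ⟨_, ⟨α, rfl⟩, z, hz, h⟩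
    exact ⟨α, by rwa [← h, add_sub_cancel_left]⟩

variable [CharP F 2] (σ : A →ₗ[F] A)

theorem apply_mul_add_apply_mul_mem_altSubmodule (hmul : ∀ x y : A, σ (x * y) = σ y * σ x)
    (hinv : ∀ x : A, σ (σ x) = x) (u v : A) : σ u * v + σ v * u ∈ altSubmodule σ :=
  ⟨σ u * v, by simp [hmul, hinv, sub_eq_add_neg, CharTwo.neg_eq_of_module F]⟩

theorem apply_sum_mul_sum_sub_sum_mem_altSubmodule (hmul : ∀ x y : A, σ (x * y) = σ y * σ x)
    (hinv : ∀ x : A, σ (σ x) = x) {ι : Type*} (s : Finset ι) (u : ι → A) :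
    σ (∑ i ∈ s, u i) * ∑ i ∈ s, u i - ∑ i ∈ s, σ (u i) * u i ∈ altSubmodule σ := by
  classical
  induction s using Finset.induction_on with
  | empty => simp
  | insert a s ha ih =>
    have hpolar := apply_mul_add_apply_mul_mem_altSubmodule σ hmul hinv (u a) (∑ i ∈ s, u i)
    convert (altSubmodule σ).add_mem ih hpolar using 1
    simp only [Finset.sum_insert ha, map_add]
    noncomm_ring

def sSubmodule (hmul : ∀ x y : A, σ (x * y) = σ y * σ x) (hinv : ∀ x : A, σ (σ x) = x) :
    Submodule F A where
  carrier := sSet σ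
  add_mem' {x y} hx hy := by
    rw [mem_sSet_iff] at hx hy ⊢
    have hpolar := apply_mul_add_apply_mul_mem_altSubmodule σ hmul hinv x y
    convert add_mem (add_mem hx hy) (Submodule.mem_sup_right hpolar) using 1
    rw [map_add]
    noncomm_ring
  zero_mem' := (mem_sSet_iff σ).2 (by simp)
  smul_mem' c x hx := (mem_sSet_iff σ).2 <| by
    rw [map_smul, smul_mul_smul_comm]
    exact Submodule.smul_mem _ _ ((mem_sSet_iff σ).1 hx)

theorem coe_sSubmodule (hmul : ∀ x y : A, σ (x * y) = σ y * σ x)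
    (hinv : ∀ x : A, σ (σ x) = x) :
    (sSubmodule σ hmul hinv : Set A) = sSet σ :=
  rfl

end Involution

section BaseChangeInvolution

open TensorProduct

variable {F A K : Type*} [Field F] [Ring A] [Algebra F A] [Field K] [Algebra F K]
  (σ : A →ₗ[F] A)

theorem LinearMap.baseChange_apply_mul_rev (hmul : ∀ x y : A, σ (x * y) = σ y * σ x)
    (u v : K ⊗[F] A) :
    σ.baseChange K (u * v) = σ.baseChange K v * σ.baseChange K u := by
  induction u with
  | zero => simp
  | add u₁ u₂ h₁ h₂ => rw [add_mul, map_add, h₁, h₂, map_add, mul_add]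
  | tmul k a =>
    induction v with
    | zero => simp
    | add v₁ v₂ h₁ h₂ => rw [mul_add, map_add, h₁, h₂, map_add, add_mul]
    | tmul k' a' => simp [hmul, mul_comm k]

theorem LinearMap.baseChange_apply_apply (hinv : ∀ x : A, σ (σ x) = x) (u : K ⊗[F] A) :
    σ.baseChange K (σ.baseChange K u) = u := by
  rw [← LinearMap.comp_apply, ← LinearMap.baseChange_comp,
    show σ ∘ₗ σ = LinearMap.id from LinearMap.ext hinv, LinearMap.baseChange_id,
    LinearMap.id_apply]

theorem altSubmodule_baseChange :
    altSubmodule (σ.baseChange K) = (altSubmodule σ).baseChange K := by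
  rw [altSubmodule, altSubmodule, ← LinearMap.range_baseChange, LinearMap.baseChange_sub,
    LinearMap.baseChange_id]

theorem baseChange_sum_tmul_mul_sub_mem_altSubmodule [CharP F 2]
    (hmul : ∀ x y : A, σ (x * y) = σ y * σ x) (hinv : ∀ x : A, σ (σ x) = x)
    {ι : Type*} [Fintype ι] (b : ι → K) (y : ι → A) :
    σ.baseChange K (∑ i, b i ⊗ₜ[F] y i) * ∑ i, b i ⊗ₜ[F] y i -
      ∑ i, (b i ^ 2) ⊗ₜ[F] (σ (y i) * y i) ∈ altSubmodule (σ.baseChange K) := by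
  have : CharP K 2 := charP_of_injective_algebraMap (algebraMap F K).injective 2
  simpa only [LinearMap.baseChange_tmul, Algebra.TensorProduct.tmul_mul_tmul, sq] using
    apply_sum_mul_sum_sub_sum_mem_altSubmodule (σ.baseChange K)
    (σ.baseChange_apply_mul_rev hmul) (σ.baseChange_apply_apply hinv) Finset.univ
    fun i => b i ⊗ₜ[F] y i

end BaseChangeInvolution

theorem stmt2_general {F A K : Type*} [Field F] [CharP F 2] [Ring A] [Algebra F A]
    (σ : A →ₗ[F] A) (hmul : ∀ x y : A, σ (x * y) = σ y * σ x) (hinv : ∀ x : A, σ (σ x) = x)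
    [Field K] [Algebra F K] [FiniteDimensional F K] (hodd : Odd (Module.finrank F K)) :
    sSet (LinearMap.baseChange K σ) =
      ↑(Submodule.span K ((fun x : A => (1 : K) ⊗ₜ[F] x) '' sSet σ)) := by
  set T := 1 ⊔ altSubmodule σ
  have hspan : Submodule.span K ((fun x : A => (1 : K) ⊗ₜ[F] x) '' sSet σ) =
      (sSubmodule σ hmul hinv).baseChange K := by
    conv_rhs => rw [← Submodule.span_eq (sSubmodule σ hmul hinv), Submodule.baseChange_span]
    rfl
  have hT : 1 ⊔ altSubmodule (σ.baseChange K) = T.baseChange K := by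
    rw [Submodule.baseChange_sup, Submodule.baseChange_one, altSubmodule_baseChange]
  let b := Module.finBasis F K
  obtain ⟨b₂, hb₂⟩ := b.exists_basis_sq hodd
  ext x
  obtain ⟨y, rfl⟩ := b.exists_sum_tmul_eq x
  have hdiff : σ.baseChange K (∑ i, b i ⊗ₜ[F] y i) * ∑ i, b i ⊗ₜ[F] y i -
      ∑ i, b₂ i ⊗ₜ[F] (σ (y i) * y i) ∈ T.baseChange K := by
    rw [← hT]
    simpa only [hb₂] using
      Submodule.mem_sup_right (baseChange_sum_tmul_mul_sub_mem_altSubmodule σ hmul hinv b y)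
  calc _ ∈ sSet (σ.baseChange K)
      ↔ σ.baseChange K (∑ i, b i ⊗ₜ[F] y i) * ∑ i, b i ⊗ₜ[F] y i ∈ T.baseChange K := by
        rw [mem_sSet_iff, hT]
    _ ↔ ∑ i, b₂ i ⊗ₜ[F] (σ (y i) * y i) ∈ T.baseChange K :=
        ⟨fun h => by simpa using sub_mem h hdiff, fun h => by simpa using add_mem hdiff h⟩
    _ ↔ ∀ i, y i ∈ sSubmodule σ hmul hinv := by
        rw [b₂.sum_tmul_mem_baseChange_iff]
        exact forall_congr' fun i => (mem_sSet_iff σ).symm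
    _ ↔ _ := by rw [SetLike.mem_coe, hspan, b.sum_tmul_mem_baseChange_iff]

theorem stmt2 {F A K : Type*} [Field F] [CharP F 2] [Ring A] [Algebra F A]
    [FiniteDimensional F A]
    (hcentral : ∀ z : A, (∀ y : A, z * y = y * z) → ∃ a : F, algebraMap F A a = z)
    (hsimple : IsSimpleOrder (TwoSidedIdeal A))
    (σ : A →ₗ[F] A) (hmul : ∀ x y : A, σ (x * y) = σ y * σ x) (hinv : ∀ x : A, σ (σ x) = x)
    (horth : IsOrthogonal σ)
    [Field K] [Algebra F K] [FiniteDimensional F K] (hodd : Odd (Module.finrank F K)) :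
    sSet (LinearMap.baseChange K σ) =
      ↑(Submodule.span K ((fun x : A => (1 : K) ⊗ₜ[F] x) '' sSet σ)) :=
  stmt2_general σ hmul hinv hodd
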